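/- Let γ ∈ [0, 1/2), α ∈ (1/2, 1], M ≥ 0, C_g ≥ 0, C* ≥ 0, and let g : [0,1] → ℝ satisfy |g(s)| ≤ M and |g(s₁) − g(s₂)| ≤ C_g |s₁ − s₂|^α for all s, s₁, s₂ ∈ [0,1]. Let λ_{0,0} ∈ ℝ with |λ_{0,0}| ≤ C*, and let (λ_{j,k})_{j∈ℕ, 0 ≤ k ≤ 2^j−1} be real numbers with |λ_{j,k}| ≤ C* √(1 + j) for all j, k. For J ∈ ℕ and t ∈ [0,1], define S_J(t) = λ_{0,0} ∫₀^t g(s) φ_{0,0}(s) ds + Σ_{j=0}^{J} Σ_{k=0}^{2^j − 1} λ_{j,k} ∫₀^t g(s) ψ_{j,k}(s) ds. Then there exist a function S ∈ C^γ([0,1]) and a constant D > 0, depending only on M, C_g, C*, γ and α, such that S_J → S in C^γ([0,1]) as J → ∞ and, for all J ∈ ℕ, ‖S − S_J‖_{C^γ([0,1])} ≤ D · 2^{−J min(1/2 − γ, α − 1/2)} √(1 + J). -/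

import Mathlib

/-!
On dyadic level `j` put `L_j(t) = ∑_k λ_{j,k} ∫₀^t g ψ_{j,k}` and `Δ = t₂ - t₁`. A dyadic interval
lying inside `[t₁, t₂]` contributes `λ_{j,k} ∫ g ψ_{j,k}`, which is `O(√(1+j) C_g 2^{-j(α+1/2)})`
because `ψ_{j,k}` has mean zero and `g` is `α`-Hölder; there are at most `2^j Δ` of them. An
interval that only partly meets `[t₁, t₂]` contains `t₁` or `t₂`, and contributes at most
`√(1+j) M 2^{j/2}` times the length of the overlap, which is at most `min(Δ, 2^{-j})`. Hence
`|L_j(t₂) - L_j(t₁)| ≲ √(1+j) (C_g 2^{-j(α-1/2)} Δ + M 2^{j/2} min(Δ, 2^{-j}))`, and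
`min(Δ, 2^{-j}) ≤ Δ^γ 2^{-j(1-γ)}` turns this into `≲ √(1+j) 2^{-jθ} Δ^γ` with
`θ = min(1/2 - γ, α - 1/2) > 0`. Summing over `j > J` bounds the Hölder norm of `S - S_J` by
`√(1+J) 2^{-Jθ}` up to a constant.
-/

open MeasureTheory Set

/-- The Haar scaling function `φ_{J,l} = 2^{J/2} 𝟙_{[l/2^J,(l+1)/2^J)}`. -/
noncomputable def haarPhi (J l : ℕ) (s : ℝ) : ℝ :=
  2 ^ ((J : ℝ) / 2) *
    (Set.Ico ((l : ℝ) / 2 ^ J) (((l : ℝ) + 1) / 2 ^ J)).indicator 1 s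

/-- The Haar wavelet `ψ_{j,k} = 2^{j/2} (𝟙_{[k/2^j,(2k+1)/2^{j+1})} − 𝟙_{[(2k+1)/2^{j+1},(k+1)/2^j)})`. -/
noncomputable def haarPsi (j k : ℕ) (s : ℝ) : ℝ :=
  2 ^ ((j : ℝ) / 2) *
    ((Set.Ico ((k : ℝ) / 2 ^ j) ((2 * (k : ℝ) + 1) / 2 ^ (j + 1))).indicator 1 s -
      (Set.Ico ((2 * (k : ℝ) + 1) / 2 ^ (j + 1)) (((k : ℝ) + 1) / 2 ^ j)).indicator 1 s)

/-- The partial sum `S_J(t) = λ_{0,0} ∫₀^t g φ_{0,0} + Σ_{j=0}^{J} Σ_{k=0}^{2^j−1} λ_{j,k} ∫₀^t g ψ_{j,k}`. -/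
noncomputable def haarPartialSum (g : ℝ → ℝ) (lam00 : ℝ) (lam : ℕ → ℕ → ℝ)
    (J : ℕ) (t : ℝ) : ℝ :=
  lam00 * (∫ s in (0 : ℝ)..t, g s * haarPhi 0 0 s) +
    ∑ j ∈ Finset.range (J + 1), ∑ k ∈ Finset.range (2 ^ j),
      lam j k * ∫ s in (0 : ℝ)..t, g s * haarPsi j k s

/-- The Hölder norm `‖u‖_{C^γ([0,1])} = sup_{[0,1]} |u| + sup_{0 ≤ t₁ < t₂ ≤ 1} |u(t₁) − u(t₂)|/(t₂ − t₁)^γ`. -/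
noncomputable def holderNorm (γ : ℝ) (u : ℝ → ℝ) : ℝ :=
  sSup ((fun t => |u t|) '' Set.Icc (0 : ℝ) 1) +
    sSup {q : ℝ | ∃ t₁ t₂ : ℝ, 0 ≤ t₁ ∧ t₁ < t₂ ∧ t₂ ≤ 1 ∧
      q = |u t₁ - u t₂| / (t₂ - t₁) ^ γ}

open Filter Topology

def HolderOnUnitInterval (γ B : ℝ) (u : ℝ → ℝ) : Prop :=
  ∀ ⦃t₁ t₂ : ℝ⦄, 0 ≤ t₁ → t₁ ≤ t₂ → t₂ ≤ 1 → |u t₂ - u t₁| ≤ B * (t₂ - t₁) ^ γ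

namespace HolderOnUnitInterval

variable {γ B B' : ℝ} {u v : ℝ → ℝ}

lemma nonneg (h : HolderOnUnitInterval γ B u) : 0 ≤ B := by
  simpa using (abs_nonneg _).trans (h le_rfl zero_le_one le_rfl)

lemma mono (h : HolderOnUnitInterval γ B u) (hB : B ≤ B') : HolderOnUnitInterval γ B' u :=
  fun _ _ h0 h12 h21 =>
    (h h0 h12 h21).trans (mul_le_mul_of_nonneg_right hB (by bound))

lemma congr (h : HolderOnUnitInterval γ B u) (huv : EqOn u v (Icc 0 1)) :
    HolderOnUnitInterval γ B v := fun t₁ t₂ h0 h12 h21 => by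
  rw [← huv ⟨h0, h12.trans h21⟩, ← huv ⟨h0.trans h12, h21⟩]
  exact h h0 h12 h21

lemma add (hu : HolderOnUnitInterval γ B u) (hv : HolderOnUnitInterval γ B' v) :
    HolderOnUnitInterval γ (B + B') (u + v) := fun t₁ t₂ h0 h12 h21 =>
  calc |(u + v) t₂ - (u + v) t₁| ≤ |u t₂ - u t₁| + |v t₂ - v t₁| := by
        simpa [add_sub_add_comm] using abs_add_le (u t₂ - u t₁) (v t₂ - v t₁)
    _ ≤ (B + B') * (t₂ - t₁) ^ γ := by
        rw [add_mul]; exact add_le_add (hu h0 h12 h21) (hv h0 h12 h21)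

lemma const_mul (h : HolderOnUnitInterval γ B u) (c : ℝ) :
    HolderOnUnitInterval γ (|c| * B) (fun t => c * u t) := fun t₁ t₂ h0 h12 h21 => by
  rw [← mul_sub, abs_mul, mul_assoc]
  exact mul_le_mul_of_nonneg_left (h h0 h12 h21) (abs_nonneg c)

lemma of_exponent_le {γ' : ℝ} (h : HolderOnUnitInterval γ' B u) (hγ : 0 ≤ γ) (hγγ' : γ ≤ γ') :
    HolderOnUnitInterval γ B u := fun t₁ t₂ h0 h12 h21 =>
  (h h0 h12 h21).trans <| mul_le_mul_of_nonneg_left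
    (Real.rpow_le_rpow_of_exponent_ge' (by linarith) (by linarith) hγ hγγ') h.nonneg

lemma abs_le (h : HolderOnUnitInterval γ B u) (hγ : 0 ≤ γ) (h0 : u 0 = 0) {t : ℝ}
    (ht : t ∈ Icc (0 : ℝ) 1) : |u t| ≤ B := by
  have := h le_rfl ht.1 ht.2
  rw [h0, sub_zero, sub_zero] at this
  exact this.trans (mul_le_of_le_one_right h.nonneg (Real.rpow_le_one ht.1 ht.2 hγ))

lemma abs_sub_le (h : HolderOnUnitInterval γ B u) {t₁ t₂ : ℝ} (ht₁ : t₁ ∈ Icc (0 : ℝ) 1)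
    (ht₂ : t₂ ∈ Icc (0 : ℝ) 1) : |u t₁ - u t₂| ≤ B * |t₁ - t₂| ^ γ := by
  rcases le_total t₁ t₂ with h12 | h21
  · rw [abs_sub_comm (u t₁), abs_sub_comm t₁, abs_of_nonneg (sub_nonneg.2 h12)]
    exact h ht₁.1 h12 ht₂.2
  · rw [abs_of_nonneg (sub_nonneg.2 h21)]
    exact h ht₂.1 h21 ht₁.2

lemma summable {u : ℕ → ℝ → ℝ} {b : ℕ → ℝ} (hγ : 0 ≤ γ)
    (hu : ∀ i, HolderOnUnitInterval γ (b i) (u i)) (hu0 : ∀ i, u i 0 = 0) (hb : Summable b)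
    {t : ℝ} (ht : t ∈ Icc (0 : ℝ) 1) : Summable fun i => u i t :=
  hb.of_norm_bounded fun i => (hu i).abs_le hγ (hu0 i) ht

lemma tsum {u : ℕ → ℝ → ℝ} {b : ℕ → ℝ} (hγ : 0 ≤ γ)
    (hu : ∀ i, HolderOnUnitInterval γ (b i) (u i)) (hu0 : ∀ i, u i 0 = 0) (hb : Summable b) :
    HolderOnUnitInterval γ (∑' i, b i) (fun t => ∑' i, u i t) := fun t₁ t₂ h0 h12 h21 => by
  rw [← (summable hγ hu hu0 hb ⟨h0.trans h12, h21⟩).tsum_sub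
    (summable hγ hu hu0 hb ⟨h0, h12.trans h21⟩), ← tsum_mul_right]
  exact tsum_of_norm_bounded (f := fun i => u i t₂ - u i t₁) (hb.mul_right _).hasSum
    fun i => hu i h0 h12 h21

end HolderOnUnitInterval

lemma holderNorm_nonneg (γ : ℝ) (u : ℝ → ℝ) : 0 ≤ holderNorm γ u := by
  refine add_nonneg (Real.sSup_nonneg ?_) (Real.sSup_nonneg ?_)
  · rintro _ ⟨t, -, rfl⟩
    exact abs_nonneg _
  · rintro _ ⟨t₁, t₂, -, h12, -, rfl⟩
    exact div_nonneg (abs_nonneg _) (Real.rpow_nonneg (sub_nonneg.2 h12.le) _)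

lemma holderNorm_le {γ B : ℝ} {u : ℝ → ℝ} (hγ : 0 ≤ γ) (h : HolderOnUnitInterval γ B u)
    (h0 : u 0 = 0) : holderNorm γ u ≤ 2 * B := by
  rw [two_mul]
  refine add_le_add (Real.sSup_le ?_ h.nonneg) (Real.sSup_le ?_ h.nonneg)
  · rintro _ ⟨t, ht, rfl⟩
    exact h.abs_le hγ h0 ht
  · rintro _ ⟨t₁, t₂, h0, h12, h21, rfl⟩
    rw [div_le_iff₀ (Real.rpow_pos_of_pos (sub_pos.2 h12) γ), abs_sub_comm]
    exact h h0 h12.le h21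

lemma continuousOn_of_abs_sub_le_rpow {s : Set ℝ} {g : ℝ → ℝ} {C α : ℝ} (hα : 0 < α)
    (hg : ∀ x ∈ s, ∀ y ∈ s, |g x - g y| ≤ C * |x - y| ^ α) : ContinuousOn g s := by
  intro x hx
  have hlim : Tendsto (fun y => C * |y - x| ^ α) (𝓝[s] x) (𝓝 0) := by
    have hcont : Continuous fun y => C * |y - x| ^ α :=
      continuous_const.mul ((continuous_id.sub continuous_const).abs.rpow_const
        fun _ => Or.inr hα.le)
    simpa [Real.zero_rpow hα.ne'] using
      (hcont.tendsto x).mono_left (nhdsWithin_le_nhds (s := s))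
  refine tendsto_iff_norm_sub_tendsto_zero.2
    (squeeze_zero' (Eventually.of_forall fun _ => norm_nonneg _) ?_ hlim)
  exact eventually_nhdsWithin_of_forall fun y hy => hg y hy x hx

/-- For `a ≤ b` and `A ≤ B`, the length of `[a, b] ∩ [A, B]`. -/
def overlapLength (a b A B : ℝ) : ℝ := max A (min b B) - max A (min a B)

lemma overlapLength_nonneg {a b : ℝ} (hab : a ≤ b) (A B : ℝ) : 0 ≤ overlapLength a b A B :=
  sub_nonneg.2 (max_le_max le_rfl (min_le_min hab le_rfl))

lemma sum_overlapLength_le (x : ℕ → ℝ) {A B : ℝ} (hAB : A ≤ B) (n : ℕ) :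
    ∑ k ∈ Finset.range n, overlapLength (x k) (x (k + 1)) A B ≤ B - A := by
  unfold overlapLength
  rw [Finset.sum_range_sub (fun k => max A (min (x k) B))]
  exact sub_le_sub (max_le hAB (min_le_right _ _)) (le_max_left _ _)

section SupportedOnIco

variable {f : ℝ → ℝ} {a b : ℝ}

lemma integral_to_clamp_eq_zero (hsupp : ∀ x ∉ Ico a b, f x = 0) (t : ℝ) :
    ∫ x in t..max a (min t b), f x = 0 := by
  refine intervalIntegral.integral_zero_ae ((Measure.ae_ne volume a).mono fun x hxa hx => ?_)
  refine hsupp x fun ⟨hax, hxb⟩ => ?_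
  rw [Set.mem_uIoc] at hx
  grind

lemma integral_eq_integral_clamp (hf : Integrable f) (hsupp : ∀ x ∉ Ico a b, f x = 0)
    (t₁ t₂ : ℝ) :
    ∫ x in t₁..t₂, f x = ∫ x in max a (min t₁ b)..max a (min t₂ b), f x := by
  have h₁ := intervalIntegral.integral_add_adjacent_intervals (a := t₁) (b := max a (min t₁ b))
    (c := t₂) hf.intervalIntegrable hf.intervalIntegrable
  have h₂ := intervalIntegral.integral_add_adjacent_intervals (a := max a (min t₁ b))
    (b := max a (min t₂ b)) (c := t₂) hf.intervalIntegrable hf.intervalIntegrable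
  rw [integral_to_clamp_eq_zero hsupp, zero_add] at h₁
  rw [intervalIntegral.integral_symm t₂ (max a (min t₂ b)), integral_to_clamp_eq_zero hsupp,
    neg_zero, add_zero] at h₂
  rw [← h₁, ← h₂]

/-- With `d = min (t₂ - t₁) (b - a)`: if `[a, b] ⊄ [t₁, t₂]`, then `[a, b] ∩ [t₁, t₂]` lies in
`[t₁, t₁ + d]` or in `[t₂ - d, t₂]`. Overlap lengths make the sum over a partition telescope. -/
lemma abs_integral_le_overlapLength (hab : a ≤ b) (hf : Integrable f)
    (hsupp : ∀ x ∉ Ico a b, f x = 0) {K F : ℝ} (hK : ∀ x, |f x| ≤ K) (hF0 : 0 ≤ F)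
    (hF : |∫ x in a..b, f x| ≤ F * (b - a)) {t₁ t₂ : ℝ} (h12 : t₁ ≤ t₂) :
    |∫ x in t₁..t₂, f x| ≤ F * overlapLength a b t₁ t₂ +
      K * (overlapLength a b t₁ (t₁ + min (t₂ - t₁) (b - a)) +
        overlapLength a b (t₂ - min (t₂ - t₁) (b - a)) t₂) := by
  set d := min (t₂ - t₁) (b - a) with hd
  have hK0 : 0 ≤ K := (abs_nonneg _).trans (hK a)
  have hov₁ := overlapLength_nonneg hab t₁ (t₁ + d)
  have hov₂ := overlapLength_nonneg hab (t₂ - d) t₂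
  rw [integral_eq_integral_clamp hf hsupp]
  by_cases hcover : t₁ ≤ a ∧ b ≤ t₂
  · have h₁ : max a (min t₁ b) = a := by grind
    have h₂ : max a (min t₂ b) = b := by grind
    have hfull : overlapLength a b t₁ t₂ = b - a := by unfold overlapLength; grind
    rw [h₁, h₂, hfull]
    exact hF.trans (le_add_of_nonneg_right (mul_nonneg hK0 (add_nonneg hov₁ hov₂)))
  · have hlen : max a (min t₂ b) - max a (min t₁ b) ≤
        overlapLength a b t₁ (t₁ + d) + overlapLength a b (t₂ - d) t₂ := by
      unfold overlapLength
      grind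
    have hmono : max a (min t₁ b) ≤ max a (min t₂ b) :=
      max_le_max le_rfl (min_le_min h12 le_rfl)
    calc |∫ x in max a (min t₁ b)..max a (min t₂ b), f x|
        ≤ K * |max a (min t₂ b) - max a (min t₁ b)| :=
          intervalIntegral.norm_integral_le_of_norm_le_const (f := f) fun x _ => hK x
      _ ≤ K * (overlapLength a b t₁ (t₁ + d) + overlapLength a b (t₂ - d) t₂) := by
          rw [abs_of_nonneg (sub_nonneg.2 hmono)]
          exact mul_le_mul_of_nonneg_left hlen hK0
      _ ≤ _ := le_add_of_nonneg_left (mul_nonneg hF0 (overlapLength_nonneg hab t₁ t₂))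

lemma integral_indicator_Ico {g : ℝ → ℝ} {a b p q : ℝ} (hg : IntegrableOn g (Ico p q))
    (hap : a ≤ p) (hpq : p ≤ q) (hqb : q ≤ b) :
    ∫ x in a..b, (Ico p q).indicator g x = ∫ x in p..q, g x := by
  rw [integral_eq_integral_clamp (hg.integrable_indicator measurableSet_Ico)
    (fun x hx => indicator_of_notMem hx g), show max p (min a q) = p by grind,
    show max p (min b q) = q by grind]
  exact intervalIntegral.integral_congr_Ioo_of_le hpq fun x hx =>
    indicator_of_mem (Ioo_subset_Ico_self hx) g

end SupportedOnIco

lemma abs_sum_mul_integral_le {n : ℕ} {x : ℕ → ℝ} {δ : ℝ} (hδ : 0 ≤ δ)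
    (hx : ∀ k, x (k + 1) - x k = δ) {c : ℕ → ℝ} {f : ℕ → ℝ → ℝ} {Λ K F : ℝ}
    (hΛ : 0 ≤ Λ) (hK0 : 0 ≤ K) (hF0 : 0 ≤ F) (hc : ∀ k < n, |c k| ≤ Λ)
    (hf : ∀ k < n, Integrable (f k)) (hsupp : ∀ k < n, ∀ s ∉ Ico (x k) (x (k + 1)), f k s = 0)
    (hK : ∀ k < n, ∀ s, |f k s| ≤ K) (hF : ∀ k < n, |∫ s in x k..x (k + 1), f k s| ≤ F * δ)
    {t₁ t₂ : ℝ} (h12 : t₁ ≤ t₂) :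
    |∑ k ∈ Finset.range n, c k * ∫ s in t₁..t₂, f k s| ≤
      Λ * (F * (t₂ - t₁) + 2 * K * min (t₂ - t₁) δ) := by
  set d := min (t₂ - t₁) δ
  have hd : 0 ≤ d := le_min (sub_nonneg.2 h12) hδ
  have hterm : ∀ k ∈ Finset.range n, |c k * ∫ s in t₁..t₂, f k s| ≤
      Λ * (F * overlapLength (x k) (x (k + 1)) t₁ t₂ +
        K * (overlapLength (x k) (x (k + 1)) t₁ (t₁ + d) +
          overlapLength (x k) (x (k + 1)) (t₂ - d) t₂)) := by
    intro k hk
    rw [Finset.mem_range] at hk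
    have hint := abs_integral_le_overlapLength (by linarith [hx k]) (hf k hk) (hsupp k hk)
      (hK k hk) hF0 (by rw [hx k]; exact hF k hk) h12
    rw [hx k] at hint
    rw [abs_mul]
    exact mul_le_mul (hc k hk) hint (abs_nonneg _) hΛ
  calc |∑ k ∈ Finset.range n, c k * ∫ s in t₁..t₂, f k s|
      ≤ ∑ k ∈ Finset.range n, |c k * ∫ s in t₁..t₂, f k s| := Finset.abs_sum_le_sum_abs _ _
    _ ≤ _ := Finset.sum_le_sum hterm
    _ = Λ * (F * ∑ k ∈ Finset.range n, overlapLength (x k) (x (k + 1)) t₁ t₂ +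
          K * (∑ k ∈ Finset.range n, overlapLength (x k) (x (k + 1)) t₁ (t₁ + d) +
            ∑ k ∈ Finset.range n, overlapLength (x k) (x (k + 1)) (t₂ - d) t₂)) := by
      simp only [Finset.mul_sum, ← Finset.sum_add_distrib]
    _ ≤ Λ * (F * (t₂ - t₁) + K * ((t₁ + d - t₁) + (t₂ - (t₂ - d)))) := by
      gcongr <;> exact sum_overlapLength_le x (by linarith) n
    _ = Λ * (F * (t₂ - t₁) + 2 * K * d) := by ring

lemma two_pow_inv_rpow (j : ℕ) (α : ℝ) : (((2 : ℝ) ^ j)⁻¹) ^ α = 2 ^ (-(j : ℝ) * α) := by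
  rw [← Real.rpow_natCast, ← Real.rpow_neg two_pos.le, ← Real.rpow_mul two_pos.le]

lemma min_le_rpow_mul_rpow {x y γ : ℝ} (hx : 0 ≤ x) (hy : 0 ≤ y) (hγ0 : 0 ≤ γ) (hγ1 : γ ≤ 1) :
    min x y ≤ x ^ γ * y ^ (1 - γ) :=
  calc min x y = min x y ^ γ * min x y ^ (1 - γ) := by
        rw [← Real.rpow_add' (le_min hx hy) (by norm_num), add_sub_cancel, Real.rpow_one]
    _ ≤ x ^ γ * y ^ (1 - γ) :=
        mul_le_mul (Real.rpow_le_rpow (le_min hx hy) (min_le_left x y) hγ0)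
          (Real.rpow_le_rpow (le_min hx hy) (min_le_right x y) (by linarith)) (by positivity)
          (by positivity)

lemma two_rpow_neg_mul (j : ℕ) (θ : ℝ) : (2 : ℝ) ^ (-(j : ℝ) * θ) = ((2 : ℝ) ^ (-θ)) ^ j := by
  rw [← Real.rpow_natCast, ← Real.rpow_mul two_pos.le]
  ring_nf

section Powers

variable {γ θ Δ : ℝ} (j : ℕ)

lemma two_rpow_mul_min_le (hγ0 : 0 ≤ γ) (hγ1 : γ ≤ 1) (hθ : θ ≤ 1 / 2 - γ) (hΔ : 0 ≤ Δ) :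
    2 ^ ((j : ℝ) / 2) * min Δ ((2 : ℝ) ^ j)⁻¹ ≤ 2 ^ (-(j : ℝ) * θ) * Δ ^ γ :=
  calc 2 ^ ((j : ℝ) / 2) * min Δ ((2 : ℝ) ^ j)⁻¹
      ≤ 2 ^ ((j : ℝ) / 2) * (Δ ^ γ * (((2 : ℝ) ^ j)⁻¹) ^ (1 - γ)) := by
        gcongr
        exact min_le_rpow_mul_rpow hΔ (by positivity) hγ0 hγ1
    _ = 2 ^ (-(j : ℝ) * (1 / 2 - γ)) * Δ ^ γ := by
        rw [two_pow_inv_rpow, mul_left_comm, ← Real.rpow_add two_pos]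
        ring_nf
    _ ≤ 2 ^ (-(j : ℝ) * θ) * Δ ^ γ := by
        gcongr 2 ^ ?_ * _
        · exact one_le_two
        · nlinarith [(j.cast_nonneg : (0 : ℝ) ≤ j)]

lemma two_rpow_mul_le {α : ℝ} (hγ1 : γ ≤ 1) (hθ : θ ≤ α - 1 / 2) (hΔ0 : 0 ≤ Δ) (hΔ1 : Δ ≤ 1) :
    2 ^ (-(j : ℝ) * (α - 1 / 2)) * Δ ≤ 2 ^ (-(j : ℝ) * θ) * Δ ^ γ := by
  gcongr 2 ^ ?_ * ?_
  · exact one_le_two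
  · nlinarith [(j.cast_nonneg : (0 : ℝ) ≤ j)]
  · exact Real.self_le_rpow_of_le_one hΔ0 hΔ1 hγ1

end Powers

noncomputable def haarShape (a h s : ℝ) : ℝ :=
  (Ico a (a + h)).indicator 1 s - (Ico (a + h) (a + 2 * h)).indicator 1 s

section HaarShape

variable {g : ℝ → ℝ} {a h : ℝ}

lemma mul_haarShape (g : ℝ → ℝ) (a h s : ℝ) :
    g s * haarShape a h s =
      (Ico a (a + h)).indicator g s - (Ico (a + h) (a + 2 * h)).indicator g s := by
  simp only [haarShape, indicator_apply, Pi.one_apply]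
  split_ifs <;> ring

lemma haarShape_eq_zero (hh : 0 ≤ h) {s : ℝ} (hs : s ∉ Ico a (a + 2 * h)) :
    haarShape a h s = 0 := by
  rw [haarShape, indicator_of_notMem fun hs' => hs (Ico_subset_Ico_right (by linarith) hs'),
    indicator_of_notMem fun hs' => hs (Ico_subset_Ico_left (by linarith) hs'), sub_zero]

lemma abs_haarShape_le_one (a h s : ℝ) : |haarShape a h s| ≤ 1 := by
  simp only [haarShape, indicator_apply, Pi.one_apply]
  split_ifs <;> grind

lemma integrableOn_Ico_first_half (hh : 0 ≤ h) (hg : IntegrableOn g (Icc a (a + 2 * h))) :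
    IntegrableOn g (Ico a (a + h)) :=
  hg.mono_set fun _ hs => ⟨hs.1, by linarith [hs.2]⟩

lemma integrableOn_Ico_second_half (hh : 0 ≤ h) (hg : IntegrableOn g (Icc a (a + 2 * h))) :
    IntegrableOn g (Ico (a + h) (a + 2 * h)) :=
  hg.mono_set fun _ hs => ⟨by linarith [hs.1], hs.2.le⟩

lemma integrable_mul_haarShape (hh : 0 ≤ h) (hg : IntegrableOn g (Icc a (a + 2 * h))) :
    Integrable fun s => g s * haarShape a h s := by
  simp only [mul_haarShape]
  exact ((integrableOn_Ico_first_half hh hg).integrable_indicator measurableSet_Ico).sub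
    ((integrableOn_Ico_second_half hh hg).integrable_indicator measurableSet_Ico)

lemma integral_mul_haarShape (hh : 0 ≤ h) (hg : IntegrableOn g (Icc a (a + 2 * h))) :
    ∫ s in a..a + 2 * h, g s * haarShape a h s =
      (∫ s in a..a + h, g s) - ∫ s in a + h..a + 2 * h, g s := by
  simp only [mul_haarShape]
  have hi₁ := (integrableOn_Ico_first_half hh hg).integrable_indicator measurableSet_Ico
  have hi₂ := (integrableOn_Ico_second_half hh hg).integrable_indicator measurableSet_Ico
  rw [intervalIntegral.integral_sub hi₁.intervalIntegrable hi₂.intervalIntegrable,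
    integral_indicator_Ico (integrableOn_Ico_first_half hh hg) le_rfl (by linarith) (by linarith),
    integral_indicator_Ico (integrableOn_Ico_second_half hh hg) (by linarith) (by linarith) le_rfl]

lemma abs_integral_mul_haarShape_le {C α : ℝ} (hh : 0 ≤ h)
    (hgi : IntegrableOn g (Icc a (a + 2 * h)))
    (hg : ∀ s₁ ∈ Icc a (a + 2 * h), ∀ s₂ ∈ Icc a (a + 2 * h), |g s₁ - g s₂| ≤ C * |s₁ - s₂| ^ α) :
    |∫ s in a..a + 2 * h, g s * haarShape a h s| ≤ C * h ^ α * h := by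
  have hshift : ∫ s in a + h..a + 2 * h, g s = ∫ s in a..a + h, g (s + h) := by
    rw [intervalIntegral.integral_comp_add_right, show a + h + h = a + 2 * h by ring]
  have hgi₁ : IntervalIntegrable g volume a (a + h) :=
    (intervalIntegrable_iff_integrableOn_Ico_of_le (by linarith)).2
      (integrableOn_Ico_first_half hh hgi)
  have hgi₂ : IntervalIntegrable (fun s => g (s + h)) volume a (a + h) := by
    have := ((intervalIntegrable_iff_integrableOn_Ico_of_le (by linarith)).2
      (integrableOn_Ico_second_half hh hgi)).comp_add_right h
    rwa [add_sub_cancel_right, show a + 2 * h - h = a + h by ring] at this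
  rw [integral_mul_haarShape hh hgi, hshift, ← intervalIntegral.integral_sub hgi₁ hgi₂]
  have := intervalIntegral.norm_integral_le_of_norm_le_const (C := C * h ^ α)
    (f := fun s => g s - g (s + h)) (a := a) (b := a + h) fun s hs => by
      rw [uIoc_of_le (by linarith)] at hs
      have := hg s ⟨hs.1.le, by linarith [hs.2]⟩ (s + h) ⟨by linarith [hs.1], by linarith [hs.2]⟩
      simpa [abs_of_nonneg hh] using this
  simpa [abs_of_nonneg hh] using this

end HaarShape

section Haar

variable {g : ℝ → ℝ} {j k : ℕ}

lemma dyadic_add_two_mul (j k : ℕ) :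
    (k : ℝ) / 2 ^ j + 2 * ((2 : ℝ) ^ (j + 1))⁻¹ = ((k + 1 : ℕ) : ℝ) / 2 ^ j := by
  push_cast
  field_simp
  ring

lemma haarPsi_eq (j k : ℕ) (s : ℝ) :
    haarPsi j k s = 2 ^ ((j : ℝ) / 2) * haarShape ((k : ℝ) / 2 ^ j) ((2 : ℝ) ^ (j + 1))⁻¹ s := by
  rw [haarPsi, haarShape, dyadic_add_two_mul,
    show (k : ℝ) / 2 ^ j + ((2 : ℝ) ^ (j + 1))⁻¹ = (2 * k + 1) / 2 ^ (j + 1) by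
      field_simp; ring]
  push_cast
  rfl

lemma haarPsi_eq_zero {s : ℝ} (hs : s ∉ Ico ((k : ℝ) / 2 ^ j) (((k + 1 : ℕ) : ℝ) / 2 ^ j)) :
    haarPsi j k s = 0 := by
  rw [← dyadic_add_two_mul] at hs
  rw [haarPsi_eq, haarShape_eq_zero (by positivity) hs, mul_zero]

lemma abs_haarPsi_le (j k : ℕ) (s : ℝ) : |haarPsi j k s| ≤ 2 ^ ((j : ℝ) / 2) := by
  rw [haarPsi_eq, abs_mul, abs_of_pos (by positivity)]
  exact mul_le_of_le_one_right (by positivity) (abs_haarShape_le_one _ _ _)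

lemma dyadic_Icc_subset (hk : k < 2 ^ j) :
    Icc ((k : ℝ) / 2 ^ j) ((k : ℝ) / 2 ^ j + 2 * ((2 : ℝ) ^ (j + 1))⁻¹) ⊆ Icc 0 1 := by
  rw [dyadic_add_two_mul]
  refine Icc_subset_Icc (by positivity) ?_
  rw [div_le_one (by positivity)]
  exact_mod_cast hk

lemma integrable_mul_haarPsi (hk : k < 2 ^ j) (hgi : IntegrableOn g (Icc 0 1)) :
    Integrable fun s => g s * haarPsi j k s := by
  simp only [haarPsi_eq, mul_left_comm (g _)]
  exact (integrable_mul_haarShape (by positivity) (hgi.mono_set (dyadic_Icc_subset hk))).const_mul _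

lemma abs_mul_haarPsi_le {M : ℝ} (hM : 0 ≤ M) (hgb : ∀ s ∈ Icc (0 : ℝ) 1, |g s| ≤ M)
    (hk : k < 2 ^ j) (s : ℝ) : |g s * haarPsi j k s| ≤ M * 2 ^ ((j : ℝ) / 2) := by
  by_cases hs : s ∈ Ico ((k : ℝ) / 2 ^ j) (((k + 1 : ℕ) : ℝ) / 2 ^ j)
  · rw [← dyadic_add_two_mul] at hs
    rw [abs_mul]
    exact mul_le_mul (hgb s (dyadic_Icc_subset hk (Ico_subset_Icc_self hs)))
      (abs_haarPsi_le j k s) (abs_nonneg _) hM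
  · rw [haarPsi_eq_zero hs, mul_zero, abs_zero]
    positivity

lemma abs_integral_mul_haarPsi_le {Cg α : ℝ} (hα : 0 ≤ α) (hCg : 0 ≤ Cg) (hk : k < 2 ^ j)
    (hgi : IntegrableOn g (Icc 0 1))
    (hg : ∀ s₁ ∈ Icc (0 : ℝ) 1, ∀ s₂ ∈ Icc (0 : ℝ) 1, |g s₁ - g s₂| ≤ Cg * |s₁ - s₂| ^ α) :
    |∫ s in (k : ℝ) / 2 ^ j..((k + 1 : ℕ) : ℝ) / 2 ^ j, g s * haarPsi j k s| ≤
      Cg * 2 ^ (-(j : ℝ) * (α - 1 / 2)) * ((2 : ℝ) ^ j)⁻¹ := by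
  set h : ℝ := ((2 : ℝ) ^ (j + 1))⁻¹
  have hh : 0 ≤ h := by positivity
  have hsub := dyadic_Icc_subset hk
  simp only [haarPsi_eq, mul_left_comm (g _)]
  rw [← dyadic_add_two_mul, intervalIntegral.integral_const_mul, abs_mul,
    abs_of_pos (by positivity)]
  have hcancel := abs_integral_mul_haarShape_le hh (hgi.mono_set hsub)
    fun s₁ hs₁ s₂ hs₂ => hg s₁ (hsub hs₁) s₂ (hsub hs₂)
  have hhj : h ≤ ((2 : ℝ) ^ j)⁻¹ :=
    inv_anti₀ (by positivity) (pow_le_pow_right₀ one_le_two j.le_succ)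
  calc 2 ^ ((j : ℝ) / 2) * |∫ s in (k : ℝ) / 2 ^ j..(k : ℝ) / 2 ^ j + 2 * h,
        g s * haarShape ((k : ℝ) / 2 ^ j) h s|
      ≤ 2 ^ ((j : ℝ) / 2) * (Cg * (((2 : ℝ) ^ j)⁻¹) ^ α * ((2 : ℝ) ^ j)⁻¹) := by
        gcongr
        exact hcancel.trans (by gcongr)
    _ = Cg * 2 ^ (-(j : ℝ) * (α - 1 / 2)) * ((2 : ℝ) ^ j)⁻¹ := by
        rw [two_pow_inv_rpow, mul_sub, mul_one_div, Real.rpow_sub two_pos, neg_mul, neg_div,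
          Real.rpow_neg two_pos.le (_ / 2)]
        field_simp

end Haar

lemma mul_haarPhi_zero_zero (g : ℝ → ℝ) (s : ℝ) :
    g s * haarPhi 0 0 s = (Ico (0 : ℝ) 1).indicator g s := by
  simp only [haarPhi, CharP.cast_eq_zero, zero_div, pow_zero, zero_add, div_one, indicator_apply]
  split_ifs <;> simp

section HaarPhi

variable {g : ℝ → ℝ}

lemma integrable_mul_haarPhi (hgi : IntegrableOn g (Icc 0 1)) :
    Integrable fun s => g s * haarPhi 0 0 s := by
  simp only [mul_haarPhi_zero_zero]
  exact (hgi.mono_set Ico_subset_Icc_self).integrable_indicator measurableSet_Ico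

lemma continuous_primitive_mul_haarPhi (hgi : IntegrableOn g (Icc 0 1)) :
    Continuous fun t => ∫ s in (0 : ℝ)..t, g s * haarPhi 0 0 s :=
  intervalIntegral.continuous_primitive
    (fun _ _ => (integrable_mul_haarPhi hgi).intervalIntegrable) 0

lemma holderOnUnitInterval_primitive_mul_haarPhi {γ M : ℝ} (hγ0 : 0 ≤ γ) (hγ1 : γ ≤ 1)
    (hgi : IntegrableOn g (Icc 0 1)) (hgb : ∀ s ∈ Icc (0 : ℝ) 1, |g s| ≤ M) :
    HolderOnUnitInterval γ M (fun t => ∫ s in (0 : ℝ)..t, g s * haarPhi 0 0 s) := by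
  refine HolderOnUnitInterval.of_exponent_le (γ' := 1) (fun t₁ t₂ _ h12 _ => ?_) hγ0 hγ1
  have hint := integrable_mul_haarPhi hgi
  rw [intervalIntegral.integral_interval_sub_left hint.intervalIntegrable
    hint.intervalIntegrable, Real.rpow_one,
    ← abs_of_nonneg (sub_nonneg.2 h12)]
  refine intervalIntegral.norm_integral_le_of_norm_le_const
    (f := fun s => g s * haarPhi 0 0 s) fun s _ => ?_
  rw [Real.norm_eq_abs, mul_haarPhi_zero_zero, indicator_apply]
  split_ifs with hs
  · exact hgb s (Ico_subset_Icc_self hs)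
  · simpa using (abs_nonneg _).trans (hgb 0 ⟨le_rfl, zero_le_one⟩)

end HaarPhi

noncomputable def haarLevel (g : ℝ → ℝ) (lam : ℕ → ℕ → ℝ) (j : ℕ) (t : ℝ) : ℝ :=
  ∑ k ∈ Finset.range (2 ^ j), lam j k * ∫ s in (0 : ℝ)..t, g s * haarPsi j k s

section HaarLevel

variable {g : ℝ → ℝ} {lam : ℕ → ℕ → ℝ} {j : ℕ}

@[simp]
lemma haarLevel_apply_zero : haarLevel g lam j 0 = 0 := by
  simp [haarLevel]

lemma continuous_haarLevel (hgi : IntegrableOn g (Icc 0 1)) : Continuous (haarLevel g lam j) :=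
  continuous_finsetSum _ fun _ hk => continuous_const.mul <|
    intervalIntegral.continuous_primitive (fun _ _ =>
      (integrable_mul_haarPsi (Finset.mem_range.1 hk) hgi).intervalIntegrable) 0

lemma haarLevel_sub (hgi : IntegrableOn g (Icc 0 1)) (t₁ t₂ : ℝ) :
    haarLevel g lam j t₂ - haarLevel g lam j t₁ =
      ∑ k ∈ Finset.range (2 ^ j), lam j k * ∫ s in t₁..t₂, g s * haarPsi j k s := by
  rw [haarLevel, haarLevel, ← Finset.sum_sub_distrib]
  refine Finset.sum_congr rfl fun k hk => ?_
  have hint := integrable_mul_haarPsi (Finset.mem_range.1 hk) hgi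
  rw [← mul_sub, intervalIntegral.integral_interval_sub_left hint.intervalIntegrable
    hint.intervalIntegrable]

variable {α M Cg Cstar : ℝ}

lemma abs_haarLevel_sub_le (hα : 0 ≤ α) (hM : 0 ≤ M) (hCg : 0 ≤ Cg) (hCstar : 0 ≤ Cstar)
    (hgi : IntegrableOn g (Icc 0 1)) (hgb : ∀ s ∈ Icc (0 : ℝ) 1, |g s| ≤ M)
    (hg : ∀ s₁ ∈ Icc (0 : ℝ) 1, ∀ s₂ ∈ Icc (0 : ℝ) 1, |g s₁ - g s₂| ≤ Cg * |s₁ - s₂| ^ α)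
    (hlam : ∀ j k : ℕ, k < 2 ^ j → |lam j k| ≤ Cstar * √(1 + (j : ℝ)))
    {t₁ t₂ : ℝ} (h12 : t₁ ≤ t₂) :
    |haarLevel g lam j t₂ - haarLevel g lam j t₁| ≤ Cstar * √(1 + (j : ℝ)) *
      (Cg * (2 ^ (-(j : ℝ) * (α - 1 / 2)) * (t₂ - t₁)) +
        2 * M * (2 ^ ((j : ℝ) / 2) * min (t₂ - t₁) ((2 : ℝ) ^ j)⁻¹)) := by
  rw [haarLevel_sub hgi]
  refine (abs_sum_mul_integral_le (x := fun k : ℕ => (k : ℝ) / 2 ^ j) (by positivity)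
    (fun k => by push_cast; ring) (by positivity) (by positivity) (by positivity)
    (fun k hk => hlam j k hk) (fun k hk => integrable_mul_haarPsi hk hgi)
    (fun k _ s hs => by rw [haarPsi_eq_zero hs, mul_zero])
    (fun k hk => abs_mul_haarPsi_le hM hgb hk)
    (fun k hk => abs_integral_mul_haarPsi_le hα hCg hk hgi hg) h12).trans_eq ?_
  ring

end HaarLevel

lemma holderOnUnitInterval_haarLevel {g : ℝ → ℝ} {lam : ℕ → ℕ → ℝ} {γ θ α M Cg Cstar : ℝ}
    (hγ0 : 0 ≤ γ) (hγ1 : γ ≤ 1) (hα : 0 ≤ α) (hθγ : θ ≤ 1 / 2 - γ) (hθα : θ ≤ α - 1 / 2)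
    (hM : 0 ≤ M) (hCg : 0 ≤ Cg) (hCstar : 0 ≤ Cstar)
    (hgi : IntegrableOn g (Icc 0 1)) (hgb : ∀ s ∈ Icc (0 : ℝ) 1, |g s| ≤ M)
    (hg : ∀ s₁ ∈ Icc (0 : ℝ) 1, ∀ s₂ ∈ Icc (0 : ℝ) 1, |g s₁ - g s₂| ≤ Cg * |s₁ - s₂| ^ α)
    (hlam : ∀ j k : ℕ, k < 2 ^ j → |lam j k| ≤ Cstar * √(1 + (j : ℝ))) (j : ℕ) :
    HolderOnUnitInterval γ (Cstar * (Cg + 2 * M) * (√(1 + (j : ℝ)) * ((2 : ℝ) ^ (-θ)) ^ j))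
      (haarLevel g lam j) := fun t₁ t₂ _ h12 h21 =>
  calc |haarLevel g lam j t₂ - haarLevel g lam j t₁|
      ≤ Cstar * √(1 + (j : ℝ)) * (Cg * (2 ^ (-(j : ℝ) * (α - 1 / 2)) * (t₂ - t₁)) +
          2 * M * (2 ^ ((j : ℝ) / 2) * min (t₂ - t₁) ((2 : ℝ) ^ j)⁻¹)) :=
        abs_haarLevel_sub_le hα hM hCg hCstar hgi hgb hg hlam h12
    _ ≤ Cstar * √(1 + (j : ℝ)) * (Cg * (2 ^ (-(j : ℝ) * θ) * (t₂ - t₁) ^ γ) +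
          2 * M * (2 ^ (-(j : ℝ) * θ) * (t₂ - t₁) ^ γ)) := by
        gcongr Cstar * √(1 + (j : ℝ)) * (Cg * ?_ + 2 * M * ?_)
        · exact two_rpow_mul_le j hγ1 hθα (by linarith) (by linarith)
        · exact two_rpow_mul_min_le j hγ0 hγ1 hθγ (by linarith)
    _ = _ := by rw [two_rpow_neg_mul]; ring

section GeometricSeries

variable {r : ℝ}

lemma summable_add_two_mul_pow (hr0 : 0 ≤ r) (hr1 : r < 1) :
    Summable fun i : ℕ => ((i : ℝ) + 2) * r ^ i := by
  have hr : ‖r‖ < 1 := by rwa [Real.norm_of_nonneg hr0]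
  simpa [add_mul] using (summable_pow_mul_geometric_of_norm_lt_one 1 hr).add
    ((summable_geometric_of_lt_one hr0 hr1).mul_left 2)

lemma summable_sqrt_mul_pow (hr0 : 0 ≤ r) (hr1 : r < 1) :
    Summable fun j : ℕ => √(1 + (j : ℝ)) * r ^ j :=
  (summable_add_two_mul_pow hr0 hr1).of_nonneg_of_le (fun _ => by positivity)
    fun j => by
      have := Real.sqrt_one_add_le (by linarith [j.cast_nonneg (α := ℝ)] : (-1 : ℝ) ≤ j)
      gcongr
      linarith [j.cast_nonneg (α := ℝ)]

lemma tsum_sqrt_mul_pow_nat_add_le (hr0 : 0 ≤ r) (hr1 : r < 1) (J : ℕ) :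
    ∑' i : ℕ, √(1 + ((i + (J + 1) : ℕ) : ℝ)) * r ^ (i + (J + 1)) ≤
      (∑' i : ℕ, ((i : ℝ) + 2) * r ^ i) * (√(1 + (J : ℝ)) * r ^ J) := by
  rw [← tsum_mul_right]
  refine Summable.tsum_le_tsum (fun i => ?_)
    ((summable_nat_add_iff (f := fun j : ℕ => √(1 + (j : ℝ)) * r ^ j) (J + 1)).2
      (summable_sqrt_mul_pow hr0 hr1))
    ((summable_add_two_mul_pow hr0 hr1).mul_right _)
  have hsqrt : √(1 + ((i + (J + 1) : ℕ) : ℝ)) ≤ √(1 + (J : ℝ)) * ((i : ℝ) + 2) := by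
    rw [← Real.sqrt_sq (by positivity : (0 : ℝ) ≤ i + 2), ← Real.sqrt_mul (by positivity)]
    gcongr
    push_cast
    have hi : (0 : ℝ) ≤ i := i.cast_nonneg
    have hJ : (0 : ℝ) ≤ J := J.cast_nonneg
    nlinarith [mul_nonneg hJ hi, mul_nonneg hJ (sq_nonneg (i : ℝ))]
  have hpow : r ^ (i + (J + 1)) ≤ r ^ i * r ^ J := by
    rw [← pow_add, ← add_assoc]
    exact pow_le_pow_of_le_one hr0 hr1.le (Nat.le_succ _)
  calc √(1 + ((i + (J + 1) : ℕ) : ℝ)) * r ^ (i + (J + 1))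
      ≤ (√(1 + (J : ℝ)) * ((i : ℝ) + 2)) * (r ^ i * r ^ J) := by gcongr
    _ = ((i : ℝ) + 2) * r ^ i * (√(1 + (J : ℝ)) * r ^ J) := by ring

end GeometricSeries

lemma HolderOnUnitInterval.tsum_sub_sum_range {γ r B : ℝ} {L : ℕ → ℝ → ℝ} (hγ : 0 ≤ γ)
    (hr0 : 0 ≤ r) (hr1 : r < 1)
    (hL : ∀ j : ℕ, HolderOnUnitInterval γ (B * (√(1 + (j : ℝ)) * r ^ j)) (L j))
    (hL0 : ∀ j, L j 0 = 0) (J : ℕ) :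
    HolderOnUnitInterval γ (B * (∑' i : ℕ, ((i : ℝ) + 2) * r ^ i) * (√(1 + (J : ℝ)) * r ^ J))
      (fun t => ∑' j, L j t - ∑ j ∈ Finset.range (J + 1), L j t) := by
  have hB : 0 ≤ B := by simpa using (hL 0).nonneg
  have hsum := (summable_sqrt_mul_pow hr0 hr1).mul_left B
  have htail := HolderOnUnitInterval.tsum hγ (fun i => hL (i + (J + 1))) (fun i => hL0 _)
    ((summable_nat_add_iff (f := fun j : ℕ => B * (√(1 + (j : ℝ)) * r ^ j)) (J + 1)).2 hsum)
  refine (htail.mono ?_).congr fun t ht => ?_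
  · rw [tsum_mul_left, mul_assoc]
    exact mul_le_mul_of_nonneg_left (tsum_sqrt_mul_pow_nat_add_le hr0 hr1 J) hB
  · have := (summable hγ hL hL0 hsum ht).sum_add_tsum_nat_add (J + 1)
    simp only
    linarith

lemma haarPartialSum_eq (g : ℝ → ℝ) (lam00 : ℝ) (lam : ℕ → ℕ → ℝ) (J : ℕ) (t : ℝ) :
    haarPartialSum g lam00 lam J t = lam00 * (∫ s in (0 : ℝ)..t, g s * haarPhi 0 0 s) +
      ∑ j ∈ Finset.range (J + 1), haarLevel g lam j t := rfl

lemma tendsto_mul_two_rpow_mul_sqrt {θ : ℝ} (hθ : 0 < θ) (D : ℝ) :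
    Tendsto (fun J : ℕ => D * 2 ^ (-(J : ℝ) * θ) * √(1 + (J : ℝ))) atTop (𝓝 0) := by
  have hr1 : (2 : ℝ) ^ (-θ) < 1 := Real.rpow_lt_one_of_one_lt_of_neg one_lt_two (by linarith)
  have hform : (fun J : ℕ => D * 2 ^ (-(J : ℝ) * θ) * √(1 + (J : ℝ))) =
      fun J : ℕ => D * (√(1 + (J : ℝ)) * ((2 : ℝ) ^ (-θ)) ^ J) :=
    funext fun J => by rw [two_rpow_neg_mul]; ring
  rw [hform]
  simpa using ((summable_sqrt_mul_pow (by positivity) hr1).tendsto_atTop_zero).const_mul D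

theorem statement13_general (γ : ℝ) (hγ0 : 0 ≤ γ) (hγ : γ < 1 / 2)
    (α : ℝ) (hα0 : 1 / 2 < α)
    (M Cg Cstar : ℝ) (hM : 0 ≤ M) (hCg : 0 ≤ Cg) (hCstar : 0 ≤ Cstar)
    (g : ℝ → ℝ) (hgb : ∀ s ∈ Set.Icc (0 : ℝ) 1, |g s| ≤ M)
    (hg : ∀ s₁ ∈ Set.Icc (0 : ℝ) 1, ∀ s₂ ∈ Set.Icc (0 : ℝ) 1,
      |g s₁ - g s₂| ≤ Cg * |s₁ - s₂| ^ α)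
    (lam00 : ℝ)
    (lam : ℕ → ℕ → ℝ)
    (hlam : ∀ j k : ℕ, k < 2 ^ j → |lam j k| ≤ Cstar * Real.sqrt (1 + (j : ℝ))) :
    ∃ (S : ℝ → ℝ) (D : ℝ), 0 < D ∧
      ContinuousOn S (Set.Icc (0 : ℝ) 1) ∧
      (∃ C : ℝ, ∀ t₁ ∈ Set.Icc (0 : ℝ) 1, ∀ t₂ ∈ Set.Icc (0 : ℝ) 1,
        |S t₁ - S t₂| ≤ C * |t₁ - t₂| ^ γ) ∧
      Filter.Tendsto
        (fun J => holderNorm γ (fun t => S t - haarPartialSum g lam00 lam J t))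
        Filter.atTop (nhds 0) ∧
      ∀ J : ℕ,
        holderNorm γ (fun t => S t - haarPartialSum g lam00 lam J t) ≤
          D * 2 ^ (-(J : ℝ) * min (1 / 2 - γ) (α - 1 / 2)) *
            Real.sqrt (1 + (J : ℝ)) := by
  set θ := min (1 / 2 - γ) (α - 1 / 2)
  have hθ : 0 < θ := lt_min (by linarith) (by linarith)
  set r : ℝ := 2 ^ (-θ)
  have hr0 : 0 ≤ r := by positivity
  have hr1 : r < 1 := Real.rpow_lt_one_of_one_lt_of_neg one_lt_two (by linarith)
  have hgi : IntegrableOn g (Icc 0 1) :=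
    (continuousOn_of_abs_sub_le_rpow (by linarith) hg).integrableOn_Icc
  have hL := holderOnUnitInterval_haarLevel hγ0 (by linarith) (by linarith) (min_le_left _ _)
    (min_le_right _ _) hM hCg hCstar hgi hgb hg hlam
  have hsum := (summable_sqrt_mul_pow hr0 hr1).mul_left (Cstar * (Cg + 2 * M))
  have hΦ := holderOnUnitInterval_primitive_mul_haarPhi hγ0 (by linarith) hgi hgb
  set S : ℝ → ℝ := fun t =>
    lam00 * (∫ s in (0 : ℝ)..t, g s * haarPhi 0 0 s) + ∑' j, haarLevel g lam j t
  set D := 2 * (Cstar * (Cg + 2 * M) * ∑' i : ℕ, ((i : ℝ) + 2) * r ^ i) + 1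
  have hbound : ∀ J : ℕ, holderNorm γ (fun t => S t - haarPartialSum g lam00 lam J t) ≤
      D * 2 ^ (-(J : ℝ) * θ) * √(1 + (J : ℝ)) := fun J => by
    have htail := (HolderOnUnitInterval.tsum_sub_sum_range hγ0 hr0 hr1 hL
      (fun _ => haarLevel_apply_zero) J).congr (v := fun t => S t - haarPartialSum g lam00 lam J t)
        fun t _ => by simp only [S, haarPartialSum_eq]; ring
    refine (holderNorm_le hγ0 htail (by simp [S, haarPartialSum_eq])).trans ?_
    rw [two_rpow_neg_mul]
    nlinarith [mul_nonneg (pow_nonneg hr0 J) (Real.sqrt_nonneg (1 + (J : ℝ)))]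
  have hcont : ContinuousOn S (Icc 0 1) :=
    (continuousOn_const.mul (continuous_primitive_mul_haarPhi hgi).continuousOn).add
      (continuousOn_tsum (fun _ => (continuous_haarLevel hgi).continuousOn) hsum
        fun j t ht => (hL j).abs_le hγ0 haarLevel_apply_zero ht)
  have hholder : HolderOnUnitInterval γ _ S :=
    (hΦ.const_mul lam00).add (HolderOnUnitInterval.tsum hγ0 hL (fun _ => haarLevel_apply_zero) hsum)
  exact ⟨S, D, by positivity, hcont, ⟨_, fun t₁ ht₁ t₂ ht₂ => hholder.abs_sub_le ht₁ ht₂⟩,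
    squeeze_zero (fun _ => holderNorm_nonneg _ _) hbound (tendsto_mul_two_rpow_mul_sqrt hθ D),
    hbound⟩

/-- Under the stated bounds on `g` and the coefficients `λ`, the Haar partial
sums `S_J` converge in `C^γ([0,1])` to some `S ∈ C^γ([0,1])`, at the geometric rate
`‖S − S_J‖_{C^γ} ≤ D 2^{−J min(1/2−γ, α−1/2)} √(1+J)` for a constant `D > 0` depending only on
`M, C_g, C*, γ, α`. -/
theorem statement13 (γ : ℝ) (hγ0 : 0 ≤ γ) (hγ : γ < 1 / 2)
    (α : ℝ) (hα0 : 1 / 2 < α) (hα1 : α ≤ 1)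
    (M Cg Cstar : ℝ) (hM : 0 ≤ M) (hCg : 0 ≤ Cg) (hCstar : 0 ≤ Cstar)
    (g : ℝ → ℝ) (hgb : ∀ s ∈ Set.Icc (0 : ℝ) 1, |g s| ≤ M)
    (hg : ∀ s₁ ∈ Set.Icc (0 : ℝ) 1, ∀ s₂ ∈ Set.Icc (0 : ℝ) 1,
      |g s₁ - g s₂| ≤ Cg * |s₁ - s₂| ^ α)
    (lam00 : ℝ) (hlam00 : |lam00| ≤ Cstar)
    (lam : ℕ → ℕ → ℝ)
    (hlam : ∀ j k : ℕ, k < 2 ^ j → |lam j k| ≤ Cstar * Real.sqrt (1 + (j : ℝ))) :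
    ∃ (S : ℝ → ℝ) (D : ℝ), 0 < D ∧
      ContinuousOn S (Set.Icc (0 : ℝ) 1) ∧
      (∃ C : ℝ, ∀ t₁ ∈ Set.Icc (0 : ℝ) 1, ∀ t₂ ∈ Set.Icc (0 : ℝ) 1,
        |S t₁ - S t₂| ≤ C * |t₁ - t₂| ^ γ) ∧
      Filter.Tendsto
        (fun J => holderNorm γ (fun t => S t - haarPartialSum g lam00 lam J t))
        Filter.atTop (nhds 0) ∧
      ∀ J : ℕ,
        holderNorm γ (fun t => S t - haarPartialSum g lam00 lam J t) ≤
          D * 2 ^ (-(J : ℝ) * min (1 / 2 - γ) (α - 1 / 2)) *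
            Real.sqrt (1 + (J : ℝ)) :=
  statement13_general γ hγ0 hγ α hα0 M Cg Cstar hM hCg hCstar g hgb hg lam00 lam hlam
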